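/- arXiv:2601.01744 — 4 statements merged into one kernel-verified Lean document; each statement's English description precedes it below -/
import Mathlib

section
/- Let k be a field with char(k) ≠ 2. The algebra k⟨T,S⟩/(T² − 1, S² − 1) (the group algebra of the infinite dihedral group's free product structure, i.e., free product of two copies of Z/2 over k) admits infinitely many pairwise non-isomorphic finite-dimensional indecomposable modules. -/
/-- The defining relations `T² = 1` and `S² = 1` on the free algebra `k⟨T,S⟩`
(generator `true` is `T`, generator `false` is `S`). -/
inductive DihedralRel (k : Type*) [Field k] : FreeAlgebra k Bool → FreeAlgebra k Bool → Prop
  | T : DihedralRel k (FreeAlgebra.ι k true * FreeAlgebra.ι k true) 1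
  | S : DihedralRel k (FreeAlgebra.ι k false * FreeAlgebra.ι k false) 1

/-- A module is indecomposable: it is nonzero and not a direct sum of two nonzero
submodules. -/
def IsIndecomposableModule (A M : Type*) [Ring A] [AddCommGroup M] [Module A M] : Prop :=
  (⊤ : Submodule A M) ≠ ⊥ ∧
    ∀ N P : Submodule A M, IsCompl N P → N = ⊥ ∨ P = ⊥

/-!
For `n : ℕ` let `B = k[ξ]/((ξ - 1)^(n+1))`, a local ring of dimension `n + 1`, and let `τ` be the
algebra involution `ξ ↦ ξ⁻¹` of `B`. Letting `T` act by `τ` and `S` by `v ↦ τ (ξ v)` makes `B` a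
module over `k⟨T,S⟩/(T² - 1, S² - 1)` on which `TS` acts as multiplication by `ξ` (a band module
whose Jordan block for `TS` has eigenvalue `1` and size `n + 1`). As `ξ` generates `B`, every
submodule is an ideal, and a local ring is not the direct sum of two nonzero ideals. Modules of
different dimensions are not isomorphic.
-/

open Polynomial

section Indecomposable

variable {A M M' : Type*} [Ring A] [AddCommGroup M] [AddCommGroup M'] [Module A M] [Module A M']

theorem IsIndecomposableModule.of_linearEquiv (e : M ≃ₗ[A] M')
    (h : IsIndecomposableModule A M) : IsIndecomposableModule A M' := by
  let g := Submodule.orderIsoMapComap e.symm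
  refine ⟨fun h0 => h.1 (by rw [← g.map_top, h0, g.map_bot]), fun N P hNP => ?_⟩
  exact (h.2 _ _ (g.isCompl hNP)).imp (fun hN => g.injective (hN.trans g.map_bot.symm))
    (fun hP => g.injective (hP.trans g.map_bot.symm))

/-- Complementary submodules that are ideals split `1 = a + b`, and in a local ring `a` or `b` is
a unit. -/
theorem IsIndecomposableModule.of_isLocalRing {B : Type*} [CommRing B] [IsLocalRing B]
    [Module A B] (h : ∀ (N : Submodule A B) (b : B) {v : B}, v ∈ N → b * v ∈ N) :
    IsIndecomposableModule A B := by
  have eq_top {N : Submodule A B} {a : B} (ha : a ∈ N) (hu : IsUnit a) : N = ⊤ :=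
    eq_top_iff.2 fun v _ => by simpa [hu.unit_spec, mul_assoc] using h N (v * ↑hu.unit⁻¹) ha
  refine ⟨fun h0 => one_ne_zero ((Submodule.mem_bot A).1 (h0 ▸ Submodule.mem_top)),
    fun N P hNP => ?_⟩
  obtain ⟨a, ha, b, hb, hab⟩ :=
    Submodule.mem_sup.1 (hNP.codisjoint.eq_top ▸ Submodule.mem_top (x := (1 : B)))
  rcases IsLocalRing.isUnit_or_isUnit_of_add_one hab with hu | hu
  · exact Or.inr (eq_bot_of_top_isCompl (eq_top ha hu ▸ hNP))
  · exact Or.inl (eq_bot_of_isCompl_top (eq_top hb hu ▸ hNP))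

end Indecomposable

section Representation

variable {k B : Type*} [Field k] [Ring B] [Algebra k B]

def dihedralRep (τ : B →ₐ[k] B) (hτ : ∀ b, τ (τ b) = b) (u : B) (hu : τ u * u = 1) :
    RingQuot (DihedralRel k) →ₐ[k] Module.End k B :=
  RingQuot.liftAlgHom k ⟨FreeAlgebra.lift k fun t =>
      if t then τ.toLinearMap else τ.toLinearMap ∘ₗ LinearMap.mulLeft k u, by
    rintro _ _ (_ | _) <;> ext v <;> simp [hτ, ← mul_assoc, hu]⟩

theorem dihedralRep_T_mul_S (τ : B →ₐ[k] B) (hτ : ∀ b, τ (τ b) = b) (u : B) (hu : τ u * u = 1)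
    (v : B) :
    dihedralRep τ hτ u hu (RingQuot.mkAlgHom k (DihedralRel k) (FreeAlgebra.ι k true) *
      RingQuot.mkAlgHom k (DihedralRel k) (FreeAlgebra.ι k false)) v = u * v := by
  simp [dihedralRep, hτ]

end Representation

theorem Submodule.mul_mem_of_adjoin_eq_top {k A B : Type*} [CommRing k] [Ring A] [Algebra k A]
    [Ring B] [Algebra k B] [Module A B] [IsScalarTower k A B] {x : B}
    (hx : Algebra.adjoin k {x} = ⊤) (N : Submodule A B) (hN : ∀ v ∈ N, x * v ∈ N)
    (b : B) {v : B} (hv : v ∈ N) : b * v ∈ N := by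
  have hb : b ∈ Algebra.adjoin k {x} := hx ▸ Algebra.mem_top
  induction hb using Algebra.adjoin_induction generalizing v with
  | mem y hy => exact (Set.mem_singleton_iff.1 hy) ▸ hN v hv
  | algebraMap c => simpa [← Algebra.smul_def] using N.smul_mem (algebraMap k A c) hv
  | add y z _ _ hy hz => simpa [add_mul] using N.add_mem (hy hv) (hz hv)
  | mul y z _ _ hy hz => simpa [mul_assoc] using hy (hz hv)

def RestrictScalars.linearEquiv (R S M : Type*) [CommSemiring R] [Semiring S] [Algebra R S]
    [AddCommMonoid M] [Module S M] [Module R M] [IsScalarTower R S M] :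
    RestrictScalars R S M ≃ₗ[R] M where
  __ := RestrictScalars.addEquiv R S M
  map_smul' c x := by simp [RestrictScalars.addEquiv_map_smul]

noncomputable section

variable (k : Type*) [Field k] (n : ℕ)

abbrev BandModule : Type _ := AdjoinRoot ((X - 1 : k[X]) ^ (n + 1))

namespace BandModule

local notation "ξ" => AdjoinRoot.root ((X - 1 : k[X]) ^ (n + 1))

theorem root_sub_one_pow : (ξ - 1) ^ (n + 1) = 0 := by
  have h := AdjoinRoot.mk_self (f := (X - 1 : k[X]) ^ (n + 1))
  rwa [map_pow, map_sub, AdjoinRoot.mk_X, map_one] at h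

theorem isUnit_root : IsUnit ξ := by
  simpa using IsNilpotent.isUnit_add_one ⟨n + 1, root_sub_one_pow k n⟩

theorem inverse_root_sub_one_pow : (Ring.inverse ξ - 1) ^ (n + 1) = 0 := by
  have : Ring.inverse ξ - 1 = -Ring.inverse ξ * (ξ - 1) := by
    rw [neg_mul, mul_sub, Ring.inverse_mul_cancel _ (isUnit_root k n)]
    ring
  rw [this, mul_pow, root_sub_one_pow, mul_zero]

def inv : BandModule k n →ₐ[k] BandModule k n :=
  AdjoinRoot.liftAlgHom _ (Algebra.ofId k _) (Ring.inverse ξ) (by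
    rw [eval₂_pow, eval₂_sub, eval₂_X, eval₂_one, inverse_root_sub_one_pow])

theorem inv_root_mul_root : inv k n ξ * ξ = 1 := by
  simp [inv, Ring.inverse_mul_cancel _ (isUnit_root k n)]

theorem inv_inv (v : BandModule k n) : inv k n (inv k n v) = v := by
  have h : inv k n (inv k n ξ) = ξ :=
    calc _ = inv k n (inv k n ξ) * (inv k n ξ * ξ) := by rw [inv_root_mul_root, mul_one]
      _ = inv k n (inv k n ξ * ξ) * ξ := by rw [map_mul, mul_assoc]
      _ = ξ := by rw [inv_root_mul_root, map_one, one_mul]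
  exact AlgHom.congr_fun
    (AdjoinRoot.algHom_ext (g₁ := (inv k n).comp (inv k n)) (g₂ := .id k _) h) v

instance : Module (RingQuot (DihedralRel k)) (BandModule k n) :=
  Module.compHom _ (dihedralRep (inv k n) (inv_inv k n) ξ (inv_root_mul_root k n)).toRingHom

theorem smul_def (a : RingQuot (DihedralRel k)) (v : BandModule k n) :
    a • v = dihedralRep (inv k n) (inv_inv k n) ξ (inv_root_mul_root k n) a v :=
  rfl

instance : IsScalarTower k (RingQuot (DihedralRel k)) (BandModule k n) where
  smul_assoc c a v := by simp [smul_def]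

def eval₁ : BandModule k n →ₐ[k] k :=
  AdjoinRoot.liftAlgHom _ (Algebra.ofId k k) 1 (by simp)

theorem nilradical_eq_ker_eval₁ : nilradical (BandModule k n) = RingHom.ker (eval₁ k n) := by
  refine le_antisymm (@nilradical_le_prime _ _ _ (RingHom.ker_isPrime _)) fun a ha => ?_
  induction a using AdjoinRoot.induction_on with | ih p => ?_
  have hp : IsRoot p 1 := by simpa [eval₁] using ha
  obtain ⟨q, rfl⟩ := dvd_iff_isRoot.2 hp
  exact ⟨n + 1, by simp [mul_pow, root_sub_one_pow]⟩

instance : IsLocalRing (BandModule k n) :=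
  have : (nilradical (BandModule k n)).IsMaximal := by
    rw [nilradical_eq_ker_eval₁]
    exact RingHom.ker_isMaximal_of_surjective _
      fun c => ⟨algebraMap k _ c, (eval₁ k n).commutes c⟩
  .of_isMaximal_nilradical _

theorem finrank : Module.finrank k (BandModule k n) = n + 1 :=
  finrank_quotient_span_eq_natDegree.trans (by simpa using natDegree_X_sub_C (1 : k))

instance : FiniteDimensional k (BandModule k n) :=
  Module.finite_of_finrank_pos (by rw [finrank]; omega)

theorem isIndecomposableModule :
    IsIndecomposableModule (RingQuot (DihedralRel k)) (BandModule k n) :=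
  .of_isLocalRing fun N => N.mul_mem_of_adjoin_eq_top (k := k) AdjoinRoot.adjoinRoot_eq_top
    fun v hv => by
      simpa only [smul_def, dihedralRep_T_mul_S] using
        N.smul_mem (RingQuot.mkAlgHom k (DihedralRel k) (FreeAlgebra.ι k true) *
          RingQuot.mkAlgHom k (DihedralRel k) (FreeAlgebra.ι k false)) hv

variable {k n} in
theorem eq_of_linearEquiv {m : ℕ}
    (e : BandModule k n ≃ₗ[RingQuot (DihedralRel k)] BandModule k m) : n = m := by
  simpa [finrank] using (e.restrictScalars k).finrank_eq

end BandModule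

end

universe u

noncomputable section

namespace BandModule

variable (k : Type) [Field k] (n : ℕ)

abbrev toModuleCat : ModuleCat.{u} (RingQuot (DihedralRel k)) :=
  ModuleCat.of _ (ULift.{u} (BandModule k n))

theorem finite_restrictScalars_toModuleCat :
    Module.Finite k (RestrictScalars k (RingQuot (DihedralRel k)) (toModuleCat.{u} k n)) :=
  .equiv ((RestrictScalars.linearEquiv _ _ (ULift (BandModule k n))).trans ULift.moduleEquiv).symm

end BandModule

end

theorem stmt_2_general (k : Type) [Field k] :
    -- `k⟨T,S⟩/(T² − 1, S² − 1)` admits infinitely many pairwise non-isomorphic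
    -- finite-dimensional indecomposable modules
    ∃ M : ℕ → ModuleCat (RingQuot (DihedralRel k)),
      (∀ n, @FiniteDimensional k (RestrictScalars k (RingQuot (DihedralRel k)) (M n)) _ _
        (RestrictScalars.module k (RingQuot (DihedralRel k)) (M n))) ∧
      (∀ n, IsIndecomposableModule (RingQuot (DihedralRel k)) (M n)) ∧
      (∀ n m : ℕ, n ≠ m → IsEmpty ((M n) ≃ₗ[RingQuot (DihedralRel k)] (M m))) := by
  refine ⟨BandModule.toModuleCat k, fun n => ?_, fun n => ?_, fun n m hnm => ⟨fun e => hnm ?_⟩⟩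
  · exact BandModule.finite_restrictScalars_toModuleCat k n
  · exact (BandModule.isIndecomposableModule k n).of_linearEquiv ULift.moduleEquiv.symm
  · exact BandModule.eq_of_linearEquiv ((ULift.moduleEquiv.symm.trans e).trans ULift.moduleEquiv)

theorem stmt_2 (k : Type) [Field k] (h2 : (2 : k) ≠ 0) :
    -- `k⟨T,S⟩/(T² − 1, S² − 1)` admits infinitely many pairwise non-isomorphic
    -- finite-dimensional indecomposable modules
    ∃ M : ℕ → ModuleCat (RingQuot (DihedralRel k)),
      (∀ n, @FiniteDimensional k (RestrictScalars k (RingQuot (DihedralRel k)) (M n)) _ _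
        (RestrictScalars.module k (RingQuot (DihedralRel k)) (M n))) ∧
      (∀ n, IsIndecomposableModule (RingQuot (DihedralRel k)) (M n)) ∧
      (∀ n m : ℕ, n ≠ m → IsEmpty ((M n) ≃ₗ[RingQuot (DihedralRel k)] (M m))) :=
  stmt_2_general k
end

section
/- Let k be a field and n ≥ 1. Consider the representation of the Kronecker-type square quiver Q̃ with four vertices a₊, a₋, b₊, b₋ and arrows ₊β₊ : a₊ → b₊, ₋β₋ : a₋ → b₋, ₋β₊ : a₊ → b₋, ₊β₋ : a₋ → b₊, given by: vector spaces kⁿ at a₊, a₋, b₊ and k^{n+1} at b₋, with ₊β₊ = Id_n, ₊β₋ = Id_n, ₋β₊ the (n+1)×n matrix [0; Id_n] (a zero row on top of the identity), and ₋β₋ the (n+1)×n matrix [Id_n; 0] (identity on top of a zero row). Then the endomorphism ring of this representation is isomorphic to k; i.e., the representation is a brick. -/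
lemma aux_right_mm (k : Type) [Field k] (n : ℕ)
    (M : Matrix (Fin (n+1)) (Fin (n+1)) k) (i : Fin (n+1)) (j : Fin n) :
    (M * Matrix.of fun (i : Fin (n + 1)) (j : Fin n) => if (i : ℕ) = (j : ℕ) then (1:k) else 0) i j
      = M i j.castSucc := by
  have key : ∀ l : Fin (n+1), ((l:ℕ) = (j:ℕ)) = (l = j.castSucc) := by
    intro l; simp [Fin.ext_iff]
  simp only [Matrix.mul_apply, Matrix.of_apply, key, mul_ite, mul_one, mul_zero,
    Finset.sum_ite_eq', Finset.mem_univ, if_true]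

lemma aux_right_mp (k : Type) [Field k] (n : ℕ)
    (M : Matrix (Fin (n+1)) (Fin (n+1)) k) (i : Fin (n+1)) (j : Fin n) :
    (M * Matrix.of fun (i : Fin (n + 1)) (j : Fin n) => if (i : ℕ) = (j : ℕ) + 1 then (1:k) else 0) i j
      = M i j.succ := by
  have key : ∀ l : Fin (n+1), ((l:ℕ) = (j:ℕ) + 1) = (l = j.succ) := by
    intro l; simp [Fin.ext_iff]
  simp only [Matrix.mul_apply, Matrix.of_apply, key, mul_ite, mul_one, mul_zero,
    Finset.sum_ite_eq', Finset.mem_univ, if_true]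

lemma aux_left_mm (k : Type) [Field k] (n : ℕ)
    (g : Matrix (Fin n) (Fin n) k) (i0 : Fin n) (j : Fin n) :
    ((Matrix.of fun (i : Fin (n + 1)) (j : Fin n) => if (i : ℕ) = (j : ℕ) then (1:k) else 0) * g)
      i0.castSucc j = g i0 j := by
  have key : ∀ l : Fin n, ((i0.castSucc:ℕ) = (l:ℕ)) = (l = i0) := by
    intro l; simp [Fin.ext_iff, eq_comm]
  simp only [Matrix.mul_apply, Matrix.of_apply, key, ite_mul, one_mul, zero_mul,
    Finset.sum_ite_eq', Finset.mem_univ, if_true]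

lemma aux_left_mm_last (k : Type) [Field k] (n : ℕ)
    (g : Matrix (Fin n) (Fin n) k) (j : Fin n) :
    ((Matrix.of fun (i : Fin (n + 1)) (j : Fin n) => if (i : ℕ) = (j : ℕ) then (1:k) else 0) * g)
      (Fin.last n) j = 0 := by
  have key : ∀ l : Fin n, (n = (l:ℕ)) = False := by
    intro l; simp; omega
  simp [Matrix.mul_apply, key]

lemma aux_left_mp (k : Type) [Field k] (n : ℕ)
    (g : Matrix (Fin n) (Fin n) k) (i0 : Fin n) (j : Fin n) :
    ((Matrix.of fun (i : Fin (n + 1)) (j : Fin n) => if (i : ℕ) = (j : ℕ) + 1 then (1:k) else 0) * g)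
      i0.succ j = g i0 j := by
  have key : ∀ l : Fin n, ((i0.succ:ℕ) = (l:ℕ) + 1) = (l = i0) := by
    intro l; simp [Fin.ext_iff, eq_comm]
  simp only [Matrix.mul_apply, Matrix.of_apply, key, ite_mul, one_mul, zero_mul,
    Finset.sum_ite_eq', Finset.mem_univ, if_true]

lemma aux_left_mp_zero (k : Type) [Field k] (n : ℕ)
    (g : Matrix (Fin n) (Fin n) k) (j : Fin n) :
    ((Matrix.of fun (i : Fin (n + 1)) (j : Fin n) => if (i : ℕ) = (j : ℕ) + 1 then (1:k) else 0) * g)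
      0 j = 0 := by
  simp [Matrix.mul_apply]




theorem stmt_6 (k : Type) [Field k] (n : ℕ) (hn : 1 ≤ n)
    -- arrow maps of the representation M_n of the square quiver:
    -- a₊ → b₊ is Id_n, a₋ → b₊ is Id_n,
    -- a₊ → b₋ is the (n+1)×n matrix [0; Id_n] (zero row on top of identity),
    -- a₋ → b₋ is the (n+1)×n matrix [Id_n; 0] (identity on top of a zero row)
    (Bpp Bpm : Matrix (Fin n) (Fin n) k)
    (Bmp Bmm : Matrix (Fin (n + 1)) (Fin n) k)
    (hBpp : Bpp = 1) (hBpm : Bpm = 1)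
    (hBmp : Bmp = Matrix.of fun (i : Fin (n + 1)) (j : Fin n) => if (i : ℕ) = (j : ℕ) + 1 then 1 else 0)
    (hBmm : Bmm = Matrix.of fun (i : Fin (n + 1)) (j : Fin n) => if (i : ℕ) = (j : ℕ) then 1 else 0) :
    -- every endomorphism (g at a₊, a₋, b₊, b₋) of this representation is a
    -- scalar multiple of the identity, i.e. End(M_n) ≅ k and M_n is a brick
    ∀ (gap gam gbp : Matrix (Fin n) (Fin n) k)
      (gbm : Matrix (Fin (n + 1)) (Fin (n + 1)) k),
      gbp * Bpp = Bpp * gap →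
      gbp * Bpm = Bpm * gam →
      gbm * Bmp = Bmp * gap →
      gbm * Bmm = Bmm * gam →
      ∃ c : k, gap = c • 1 ∧ gam = c • 1 ∧ gbp = c • 1 ∧ gbm = c • 1 := by
  subst hBpp hBpm hBmp hBmm
  intro gap gam gbp gbm h1 h2 h3 h4
  rw [mul_one, one_mul] at h1 h2
  have hgam : gam = gap := by rw [← h2, h1]
  rw [hgam] at h4
  have F1 : ∀ (i j : Fin n), gbm i.castSucc j.castSucc = gap i j := by
    intro i j
    have e := congrFun (congrFun h4 i.castSucc) j
    rwa [aux_right_mm, aux_left_mm] at e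
  have F2 : ∀ j : Fin n, gbm (Fin.last n) j.castSucc = 0 := by
    intro j
    have e := congrFun (congrFun h4 (Fin.last n)) j
    rwa [aux_right_mm, aux_left_mm_last] at e
  have F3 : ∀ (i j : Fin n), gbm i.succ j.succ = gap i j := by
    intro i j
    have e := congrFun (congrFun h3 i.succ) j
    rwa [aux_right_mp, aux_left_mp] at e
  have F4 : ∀ j : Fin n, gbm 0 j.succ = 0 := by
    intro j
    have e := congrFun (congrFun h3 0) j
    rwa [aux_right_mp, aux_left_mp_zero] at e
  have S : ∀ (i j : ℕ) (hi : i + 1 < n) (hj : j + 1 < n),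
      gap ⟨i+1, hi⟩ ⟨j+1, hj⟩ = gap ⟨i, by omega⟩ ⟨j, by omega⟩ := by
    intro i j hi hj
    have e1 := F1 ⟨i+1, hi⟩ ⟨j+1, hj⟩
    have e3 := F3 ⟨i, by omega⟩ ⟨j, by omega⟩
    have hr : (⟨i+1, hi⟩ : Fin n).castSucc = (⟨i, by omega⟩ : Fin n).succ := by
      ext; simp
    have hc : (⟨j+1, hj⟩ : Fin n).castSucc = (⟨j, by omega⟩ : Fin n).succ := by
      ext; simp
    rw [hr, hc, e3] at e1
    exact e1.symm
  have D : ∀ (d i j : ℕ) (hi : i + d < n) (hj : j + d < n),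
      gap ⟨i+d, hi⟩ ⟨j+d, hj⟩ = gap ⟨i, by omega⟩ ⟨j, by omega⟩ := by
    intro d
    induction d with
    | zero => intro i j hi hj; rfl
    | succ d ih =>
      intro i j hi hj
      exact (S (i+d) (j+d) (by omega) (by omega)).trans (ih i j (by omega) (by omega))
  have T : ∀ (j' : ℕ) (hj : j' < n), 0 < j' → gap ⟨0, by omega⟩ ⟨j', hj⟩ = 0 := by
    intro j' hj h0
    have e1 := F1 ⟨0, by omega⟩ ⟨j', hj⟩
    have e4 := F4 ⟨j'-1, by omega⟩
    have hr : ((⟨0, by omega⟩ : Fin n)).castSucc = (0 : Fin (n+1)) := by ext; simp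
    have hc : ((⟨j', hj⟩ : Fin n)).castSucc = (⟨j'-1, by omega⟩ : Fin n).succ := by
      ext; simp; omega
    rw [hr, hc, e4] at e1
    exact e1.symm
  have B : ∀ (j' : ℕ) (hj : j' + 1 < n),
      gap ⟨n-1, by omega⟩ ⟨j', by omega⟩ = 0 := by
    intro j' hj
    have e3 := F3 ⟨n-1, by omega⟩ ⟨j', by omega⟩
    have e2 := F2 ⟨j'+1, hj⟩
    have hr : ((⟨n-1, by omega⟩ : Fin n)).succ = Fin.last n := by ext; simp; omega
    have hc : ((⟨j', by omega⟩ : Fin n)).succ = (⟨j'+1, hj⟩ : Fin n).castSucc := by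
      ext; simp
    rw [hr, hc, e2] at e3
    exact e3.symm
  set c : k := gap ⟨0, by omega⟩ ⟨0, by omega⟩ with hc_def
  have hgap : gap = c • (1 : Matrix (Fin n) (Fin n) k) := by
    ext i j
    rw [Matrix.smul_apply, Matrix.one_apply, smul_eq_mul, mul_ite, mul_one, mul_zero]
    rcases lt_trichotomy (i:ℕ) (j:ℕ) with h | h | h
    · rw [if_neg (by intro he; rw [he] at h; omega)]
      have hi' : i = (⟨0 + (i:ℕ), by omega⟩ : Fin n) := by ext; simp
      have hj' : j = (⟨((j:ℕ)-(i:ℕ)) + (i:ℕ), by omega⟩ : Fin n) := by ext; simp; omega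
      rw [hi', hj', D (i:ℕ) 0 ((j:ℕ)-(i:ℕ)) (by omega) (by omega)]
      exact T ((j:ℕ)-(i:ℕ)) (by omega) (by omega)
    · have he : i = j := by ext; exact h
      subst he
      rw [if_pos rfl]
      have hi' : i = (⟨0 + (i:ℕ), by omega⟩ : Fin n) := by ext; simp
      rw [hi', D (i:ℕ) 0 0 (by omega) (by omega)]
    · rw [if_neg (by intro he; rw [he] at h; omega)]
      have e := (D (n-1-(i:ℕ)) (i:ℕ) (j:ℕ) (by omega) (by omega)).symm
      have hz : gap ⟨(i:ℕ)+(n-1-(i:ℕ)), by omega⟩ ⟨(j:ℕ)+(n-1-(i:ℕ)), by omega⟩ = 0 := by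
        have hr : (⟨(i:ℕ)+(n-1-(i:ℕ)), by omega⟩ : Fin n) = ⟨n-1, by omega⟩ := by
          ext; simp; omega
        rw [hr]
        exact B ((j:ℕ)+(n-1-(i:ℕ))) (by omega)
      exact e.trans hz
  refine ⟨c, hgap, hgam.trans hgap, h1.trans hgap, ?_⟩
  ext i j
  rw [Matrix.smul_apply, Matrix.one_apply, smul_eq_mul, mul_ite, mul_one, mul_zero]
  by_cases hj : (j:ℕ) < n
  · have hcj : (⟨(j:ℕ), hj⟩ : Fin n).castSucc = j := by ext; simp
    by_cases hi : (i:ℕ) < n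
    · have hci : (⟨(i:ℕ), hi⟩ : Fin n).castSucc = i := by ext; simp
      have e := F1 ⟨(i:ℕ), hi⟩ ⟨(j:ℕ), hj⟩
      rw [hci, hcj] at e
      rw [e, hgap, Matrix.smul_apply, Matrix.one_apply, smul_eq_mul, mul_ite, mul_one, mul_zero]
      by_cases hij : i = j
      · rw [if_pos (by ext; simp [Fin.ext_iff] at hij ⊢; omega), if_pos hij]
      · rw [if_neg (by intro he; apply hij; ext; simp [Fin.ext_iff] at he ⊢; omega),
          if_neg hij]
    · have hli : Fin.last n = i := by ext; simp; omega
      have e := F2 ⟨(j:ℕ), hj⟩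
      rw [hli, hcj] at e
      rw [e, if_neg (by intro he; rw [he] at hi; omega)]
  · have hnp : n - 1 < n := Nat.sub_lt hn Nat.one_pos
    have hsj : (⟨n-1, hnp⟩ : Fin n).succ = j := by
      ext; simp; have := j.isLt; omega
    by_cases hi : (i:ℕ) = 0
    · have hi0 : i = 0 := by ext; simpa using hi
      have e := F4 (⟨n-1, hnp⟩ : Fin n)
      rw [hsj] at e
      rw [hi0, e, if_neg (by
        intro he; have h0 : (0:ℕ) = (j:ℕ) := congrArg Fin.val he; omega)]
    · have hip : (i:ℕ) - 1 < n :=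
        lt_of_lt_of_le (Nat.sub_lt (Nat.pos_of_ne_zero hi) Nat.one_pos)
          (Nat.lt_succ_iff.mp i.isLt)
      have hsi : (⟨(i:ℕ)-1, hip⟩ : Fin n).succ = i := by ext; simp; omega
      rw [← hsi, ← hsj, F3, hgap, Matrix.smul_apply, Matrix.one_apply, smul_eq_mul,
        mul_ite, mul_one, mul_zero]
      by_cases hin : (i:ℕ) = n
      · have hq : (⟨(i:ℕ)-1, hip⟩ : Fin n) = ⟨n-1, hnp⟩ := by ext; simp; omega
        rw [if_pos hq, if_pos (congrArg Fin.succ hq)]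
      · have hq : ¬((⟨(i:ℕ)-1, hip⟩ : Fin n) = ⟨n-1, hnp⟩) := by
          intro he
          have hv := congrArg Fin.val he
          simp at hv
          have := i.isLt; omega
        have hq2 : ¬((⟨(i:ℕ)-1, hip⟩ : Fin n).succ = (⟨n-1, hnp⟩ : Fin n).succ) :=
          fun he => hq (Fin.succ_injective _ he)
        rw [if_neg hq, if_neg hq2]
end

section
/- Let k be a field. For each n ≥ 1 there is a representation M_n of the four-vertex square quiver (vertices a₊, a₋, b₊, b₋; arrows a₊→b₊, a₋→b₋, a₊→b₋, a₋→b₊) which is a brick, and M_n ≇ M_m for n ≠ m; hence the path algebra of this quiver admits infinitely many pairwise non-isomorphic bricks. -/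
/-- A representation of the four-vertex square quiver
(vertices a₊, a₋, b₊, b₋; arrows a₊→b₊, a₋→b₋, a₊→b₋, a₋→b₊),
given by dimension vectors and arrow matrices. -/
structure SquareQuiverRep (k : Type) [Field k] where
  dap : ℕ
  dam : ℕ
  dbp : ℕ
  dbm : ℕ
  /-- arrow a₊ → b₊ -/
  fpp : Matrix (Fin dbp) (Fin dap) k
  /-- arrow a₋ → b₋ -/
  fmm : Matrix (Fin dbm) (Fin dam) k
  /-- arrow a₊ → b₋ -/
  fpm : Matrix (Fin dbm) (Fin dap) k
  /-- arrow a₋ → b₊ -/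
  fmp : Matrix (Fin dbp) (Fin dam) k

variable {k : Type} [Field k]

/-- A morphism of representations of the square quiver: a family of linear maps
at the vertices commuting with all the arrow maps. -/
structure SquareQuiverRep.Hom (R S : SquareQuiverRep k) where
  gap : (Fin R.dap → k) →ₗ[k] (Fin S.dap → k)
  gam : (Fin R.dam → k) →ₗ[k] (Fin S.dam → k)
  gbp : (Fin R.dbp → k) →ₗ[k] (Fin S.dbp → k)
  gbm : (Fin R.dbm → k) →ₗ[k] (Fin S.dbm → k)
  commpp : ∀ v, gbp (R.fpp.mulVec v) = S.fpp.mulVec (gap v)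
  commmm : ∀ v, gbm (R.fmm.mulVec v) = S.fmm.mulVec (gam v)
  commpm : ∀ v, gbm (R.fpm.mulVec v) = S.fpm.mulVec (gap v)
  commmp : ∀ v, gbp (R.fmp.mulVec v) = S.fmp.mulVec (gam v)

/-- Two representations are isomorphic if there is a morphism between them all of
whose vertex maps are bijective. -/
def SquareQuiverRep.Iso (R S : SquareQuiverRep k) : Prop :=
  ∃ g : R.Hom S, Function.Bijective g.gap ∧ Function.Bijective g.gam ∧
    Function.Bijective g.gbp ∧ Function.Bijective g.gbm

/-- A representation is a brick if it is nonzero and every endomorphism is a scalar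
multiple of the identity (so its endomorphism ring is `k`, a division ring). -/
def SquareQuiverRep.IsBrick (R : SquareQuiverRep k) : Prop :=
  (R.dap + R.dam + R.dbp + R.dbm ≠ 0) ∧
    ∀ g : R.Hom R, ∃ c : k,
      g.gap = c • LinearMap.id ∧ g.gam = c • LinearMap.id ∧
      g.gbp = c • LinearMap.id ∧ g.gbm = c • LinearMap.id

/-!
Write `M_n` for the representation with `a₊ = a₋ = b₊ = kⁿ`, `b₋ = kⁿ⁺¹`, identity maps into `b₊`,
and the two inclusions `[Id; 0]`, `[0; Id]` into `b₋`. The identity arrows force an endomorphism to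
act by one map `φ` on `a₊, a₋, b₊`; at `b₋` it is then a map `ψ` with `ψ ∘ [Id; 0] = [Id; 0] ∘ φ`
and `ψ ∘ [0; Id] = [0; Id] ∘ φ`. Hence the matrix of `ψ` is constant along diagonals, and the
zero corners of the two inclusions kill its off-diagonal entries, so `ψ` and `φ` are scalars.
The dimension `n + 1` of `b₋` separates the `M_n`.
-/

open Matrix

lemma Fin.eq_ite_of_shift_invariant {α : Type*} [Zero α] {N : ℕ}
    (b : Fin (N + 1) → Fin (N + 1) → α)
    (hshift : ∀ i j : Fin N, b i.succ j.succ = b i.castSucc j.castSucc)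
    (hfirst : ∀ j : Fin N, b 0 j.succ = 0)
    (hlast : ∀ j : Fin N, b (Fin.last N) j.castSucc = 0) (i j : Fin (N + 1)) :
    b i j = if i = j then b 0 0 else 0 := by
  have shift : ∀ (s : ℕ) (i j i' j' : Fin (N + 1)), (i' : ℕ) = i + s → (j' : ℕ) = j + s →
      b i' j' = b i j := by
    intro s
    induction s with
    | zero => intro i j i' j' hi hj; rw [Fin.ext hi, Fin.ext hj]
    | succ s ih =>
      intro i j i' j' hi hj
      have hsucc :
          b i' j' = b (⟨i + s, by omega⟩ : Fin N).succ (⟨j + s, by omega⟩ : Fin N).succ := by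
        congr 1 <;> exact Fin.ext (by simp; omega)
      rw [hsucc, hshift]
      exact ih _ _ _ _ rfl rfl
  rcases lt_trichotomy (i : ℕ) j with h | h | h
  · rw [if_neg (Fin.ne_of_lt h), shift i 0 (Fin.succ ⟨j - i - 1, by omega⟩) i j (by simp)
      (by simp; omega), hfirst]
  · rw [if_pos (Fin.ext h), shift i 0 0 i j (by simp) (by simp [h])]
  · rw [if_neg (Fin.ne_of_gt h),
      ← shift (N - i) i j (Fin.last N) (Fin.castSucc ⟨j + N - i, by omega⟩) (by simp; omega)
        (by simp; omega), hlast]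

def inclTop (k : Type) [Field k] (n : ℕ) : Matrix (Fin (n + 1)) (Fin n) k :=
  of fun i j => if i = j.castSucc then 1 else 0

def inclBot (k : Type) [Field k] (n : ℕ) : Matrix (Fin (n + 1)) (Fin n) k :=
  of fun i j => if i = j.succ then 1 else 0

section Inclusions

variable {n : ℕ} (v : Fin n → k)

@[simp] lemma inclTop_mulVec_castSucc (i : Fin n) : (inclTop k n *ᵥ v) i.castSucc = v i := by
  simp [inclTop, mulVec, dotProduct]

@[simp] lemma inclTop_mulVec_last : (inclTop k n *ᵥ v) (Fin.last n) = 0 := by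
  simp [inclTop, mulVec, dotProduct, eq_comm, Fin.castSucc_ne_last]

@[simp] lemma inclBot_mulVec_succ (i : Fin n) : (inclBot k n *ᵥ v) i.succ = v i := by
  simp [inclBot, mulVec, dotProduct]

@[simp] lemma inclBot_mulVec_zero : (inclBot k n *ᵥ v) 0 = 0 := by
  simp [inclBot, mulVec, dotProduct, eq_comm, Fin.succ_ne_zero]

lemma inclTop_mulVec_single (j : Fin n) :
    inclTop k n *ᵥ Pi.single j 1 = Pi.single j.castSucc 1 := by
  ext i
  simp [inclTop, mulVec_single, Pi.single_apply]

lemma inclBot_mulVec_single (j : Fin n) :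
    inclBot k n *ᵥ Pi.single j 1 = Pi.single j.succ 1 := by
  ext i
  simp [inclBot, mulVec_single, Pi.single_apply]

end Inclusions

theorem exists_eq_smul_id_of_comm_inclTop_inclBot {n : ℕ}
    (φ : (Fin n → k) →ₗ[k] (Fin n → k)) (ψ : (Fin (n + 1) → k) →ₗ[k] (Fin (n + 1) → k))
    (htop : ∀ v, ψ (inclTop k n *ᵥ v) = inclTop k n *ᵥ φ v)
    (hbot : ∀ v, ψ (inclBot k n *ᵥ v) = inclBot k n *ᵥ φ v) :
    ∃ c : k, φ = c • LinearMap.id ∧ ψ = c • LinearMap.id := by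
  set b : Fin (n + 1) → Fin (n + 1) → k := fun i j => ψ (Pi.single j 1) i
  have hdiag := Fin.eq_ite_of_shift_invariant b
    (fun i j => by
      simp only [b, ← inclTop_mulVec_single, ← inclBot_mulVec_single, htop, hbot,
        inclTop_mulVec_castSucc, inclBot_mulVec_succ])
    (fun j => by simp only [b, ← inclBot_mulVec_single, hbot, inclBot_mulVec_zero])
    (fun j => by simp only [b, ← inclTop_mulVec_single, htop, inclTop_mulVec_last])
  have hψ : ψ = b 0 0 • LinearMap.id := by
    refine LinearMap.pi_ext' fun j => LinearMap.ext_ring (funext fun i => ?_)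
    simpa [Pi.single_apply, eq_comm] using hdiag i j
  refine ⟨b 0 0, LinearMap.ext fun v => funext fun i => ?_, hψ⟩
  simpa [hψ] using congrFun (htop v).symm i.castSucc

abbrev SquareQuiverRep.M (k : Type) [Field k] (n : ℕ) : SquareQuiverRep k :=
  ⟨n, n, n, n + 1, 1, inclTop k n, inclBot k n, 1⟩

theorem SquareQuiverRep.isBrick_M (n : ℕ) : (M k n).IsBrick := by
  refine ⟨by simp, fun g => ?_⟩
  have hap : g.gbp = g.gap := LinearMap.ext fun v => by simpa using g.commpp v
  have ham : g.gbp = g.gam := LinearMap.ext fun v => by simpa using g.commmp v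
  obtain ⟨c, hφ, hψ⟩ := exists_eq_smul_id_of_comm_inclTop_inclBot g.gap g.gbm
    (fun v => by simpa [← hap, ham] using g.commmm v) g.commpm
  exact ⟨c, hφ, (ham.symm.trans hap).trans hφ, hap.trans hφ, hψ⟩

theorem SquareQuiverRep.Iso.dbm_eq {R S : SquareQuiverRep k} (h : R.Iso S) : R.dbm = S.dbm := by
  obtain ⟨g, -, -, -, hbm⟩ := h
  simpa using (LinearEquiv.ofBijective g.gbm hbm).finrank_eq

theorem stmt_7 (k : Type) [Field k] :
    -- for each n ≥ 1 there is a representation M_n of the square quiver which is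
    -- a brick, and M_n ≇ M_m for n ≠ m: the path algebra of this quiver admits
    -- infinitely many pairwise non-isomorphic bricks
    ∃ M : ℕ → SquareQuiverRep k,
      (∀ n, 1 ≤ n → (M n).IsBrick) ∧
      (∀ n m, 1 ≤ n → 1 ≤ m → n ≠ m → ¬ (M n).Iso (M m)) := by
  exact ⟨SquareQuiverRep.M k, fun n _ => SquareQuiverRep.isBrick_M n,
    fun n m _ _ hnm h => hnm (by simpa using h.dbm_eq)⟩
end

section
/- Let k be an infinite field. The path algebra over k of the quiver of type D̃₄ (central vertex with four outward arrows to leaves) admits infinitely many pairwise non-isomorphic finite-dimensional bricks; explicitly, for λ ∈ k \ {0,1}, the representations with k² at the center, k at each leaf, and the four maps given by the row vectors (1,0), (0,1), (1,1), (1,λ) are pairwise non-isomorphic bricks. -/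
/-- The representation of the quiver D̃₄ (central vertex with four outward arrows)
with k² at the center and k at each leaf: the four arrow maps are the row vectors
(1,0), (0,1), (1,1), (1,λ). -/
def DFourRep (k : Type) [Field k] (l : k) : Fin 4 → Matrix (Fin 1) (Fin 2) k :=
  fun i => Matrix.of fun _ j => ![![1, 0], ![0, 1], ![1, 1], ![1, l]] i j

theorem stmt_19 (k : Type) [Field k] [Infinite k] :
    -- each representation (λ ∉ {0,1}) is a brick: every endomorphism
    -- (g_center, g_leaf i) is a scalar multiple of the identity,
    (∀ l : k, l ≠ 0 → l ≠ 1 →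
      ∀ (gc : Matrix (Fin 2) (Fin 2) k) (gl : Fin 4 → Matrix (Fin 1) (Fin 1) k),
        (∀ i, gl i * DFourRep k l i = DFourRep k l i * gc) →
        ∃ c : k, gc = c • 1 ∧ ∀ i, gl i = c • 1) ∧
    -- and distinct parameters give non-isomorphic representations, so the path
    -- algebra of D̃₄ admits infinitely many pairwise non-isomorphic bricks
    (∀ l m : k, l ≠ 0 → l ≠ 1 → m ≠ 0 → m ≠ 1 → l ≠ m →
      ¬ ∃ (gc : Matrix (Fin 2) (Fin 2) k) (gl : Fin 4 → Matrix (Fin 1) (Fin 1) k),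
        IsUnit gc ∧ (∀ i, IsUnit (gl i)) ∧
        ∀ i, gl i * DFourRep k l i = DFourRep k m i * gc) := by
  have key : ∀ (l m : k) (gc : Matrix (Fin 2) (Fin 2) k)
      (gl : Fin 4 → Matrix (Fin 1) (Fin 1) k),
      (∀ i, gl i * DFourRep k l i = DFourRep k m i * gc) →
      gc 0 1 = 0 ∧ gc 1 0 = 0 ∧ gc 1 1 = gc 0 0 ∧ (∀ i, gl i 0 0 = gc 0 0) ∧
        gc 0 0 * l = m * gc 0 0 := by
    intro l m gc gl h
    have e00 := congrFun (congrFun (h 0) 0) 0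
    have e01 := congrFun (congrFun (h 0) 0) 1
    have e10 := congrFun (congrFun (h 1) 0) 0
    have e11 := congrFun (congrFun (h 1) 0) 1
    have e20 := congrFun (congrFun (h 2) 0) 0
    have e21 := congrFun (congrFun (h 2) 0) 1
    have e30 := congrFun (congrFun (h 3) 0) 0
    have e31 := congrFun (congrFun (h 3) 0) 1
    simp [Matrix.mul_apply, Fin.sum_univ_two, DFourRep] at e00 e01 e10 e11 e20 e21 e30 e31
    have hb : gc 0 1 = 0 := e01.symm
    have hc : gc 1 0 = 0 := e10.symm
    have hd : gc 1 1 = gc 0 0 := by linear_combination e20 - e21 - e10 + e01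
    have hg3 : gl 3 0 0 = gc 0 0 := by linear_combination e30 - m * e10
    refine ⟨hb, hc, hd, ?_, ?_⟩
    · intro i
      fin_cases i
      · exact e00
      · exact e11.trans hd
      · show gl 2 0 0 = gc 0 0
        linear_combination e20 - e10
      · exact hg3
    · linear_combination e31 + m * hd - l * hg3 - e01
  constructor
  · intro l hl0 hl1 gc gl h
    obtain ⟨hb, hc, hd, hgl, hlm⟩ := key l l gc gl h
    refine ⟨gc 0 0, ?_, ?_⟩
    · ext i j
      fin_cases i <;> fin_cases j <;>
        simp [Matrix.one_apply, hb, hc, hd]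
    · intro i
      ext a b
      fin_cases a; fin_cases b
      simp [hgl i]
  · intro l m hl0 hl1 hm0 hm1 hlm ⟨gc, gl, hu, _, h⟩
    obtain ⟨hb, hc, hd, hgl, heq⟩ := key l m gc gl h
    have ha : gc 0 0 = 0 := by
      have h2 : gc 0 0 * (l - m) = 0 := by linear_combination heq
      rcases mul_eq_zero.mp h2 with h' | h'
      · exact h'
      · exact absurd (sub_eq_zero.mp h') hlm
    have hz : gc = 0 := by
      ext i j; fin_cases i <;> fin_cases j <;> simp [ha, hb, hc, hd]
    rw [hz, Matrix.isUnit_iff_isUnit_det] at hu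
    simp at hu
end
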